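/- arXiv:2208.13325 — 5 statements merged into one kernel-verified Lean document; each statement's English description precedes it below -/
import Mathlib

section
/- Let n ≥ 1, let U be an n×n integer matrix with det U = ±1, let p and p_1,…,p_n be positive integers, and set B_f = U·diag(p/p_1,…,p/p_n) (an invertible n×n rational matrix). Then the labeling function f : I → ℚ^n defined by f(z) = (B_f z) mod p (componentwise reduction into [0,p)) is a bijection from the message space I = {0,…,p_1−1}×⋯×{0,…,p_n−1} onto the lattice code C(Λ_f, pℤ^n) = L(B_f) ∩ [0,p)^n. -/
/-- `qmod x m = x - m * ⌊x / m⌋`, the unique representative of `x` modulo `m` in `[0, m)`. -/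
def qmod (x m : ℚ) : ℚ := x - m * ⌊x / m⌋

/-!
Since `B_f · diag(p₁, …, pₙ) = p U` with `U` unimodular, `B_f` maps the sublattice
`diag(p₁, …, pₙ) ℤⁿ` onto `p ℤⁿ`. Reduction mod `p` subtracts a vector of `p ℤⁿ`, so it keeps
`B_f z` in `L(B_f)`, and the labeling induces a bijection
`ℤⁿ / diag(p₁, …, pₙ) ℤⁿ → L(B_f) / p ℤⁿ`. The message space and the code are systems of
representatives of these two quotients, the latter because `[0, p)ⁿ` is a fundamental domain
of `p ℤⁿ`.
-/

open Matrix Set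

lemma qmod_eq_mul_fract (x : ℚ) {p : ℚ} (hp : p ≠ 0) : qmod x p = p * Int.fract (x / p) := by
  rw [qmod, Int.fract, mul_sub, mul_div_cancel₀ x hp]

lemma qmod_nonneg (x : ℚ) {p : ℚ} (hp : 0 < p) : 0 ≤ qmod x p := by
  rw [qmod_eq_mul_fract x hp.ne']
  exact mul_nonneg hp.le (Int.fract_nonneg _)

lemma qmod_lt (x : ℚ) {p : ℚ} (hp : 0 < p) : qmod x p < p := by
  rw [qmod_eq_mul_fract x hp.ne']
  exact mul_lt_of_lt_one_right hp (Int.fract_lt_one _)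

lemma qmod_of_nonneg_of_lt {x p : ℚ} (h0 : 0 ≤ x) (h1 : x < p) : qmod x p = x := by
  have hfloor : ⌊x / p⌋ = 0 :=
    Int.floor_eq_zero_iff.mpr ⟨div_nonneg h0 (h0.trans h1.le), (div_lt_one (h0.trans_lt h1)).mpr h1⟩
  simp [qmod, hfloor]

lemma qmod_add_mul_intCast (x : ℚ) {p : ℚ} (hp : p ≠ 0) (m : ℤ) :
    qmod (x + p * m) p = qmod x p := by
  have hdiv : (x + p * m) / p = x / p + m := by field_simp
  rw [qmod, qmod, hdiv, Int.floor_add_intCast]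
  push_cast
  ring

lemma sub_eq_mul_of_qmod_eq {x y p : ℚ} (h : qmod x p = qmod y p) :
    x - y = p * ((⌊x / p⌋ - ⌊y / p⌋ : ℤ) : ℚ) := by
  rw [qmod, qmod] at h
  push_cast
  linarith

section LatticeCode

variable {ι : Type*} [Fintype ι] [DecidableEq ι]

def codeBasis (U : Matrix ι ι ℤ) (p : ℤ) (ps : ι → ℤ) : Matrix ι ι ℚ :=
  U.map ((↑) : ℤ → ℚ) * diagonal fun i => (p : ℚ) / (ps i : ℚ)

def messageSpace (ps : ι → ℤ) : Set (ι → ℤ) :=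
  {z | ∀ i, 0 ≤ z i ∧ z i < ps i}

def latticeCode (B : Matrix ι ι ℚ) (p : ℚ) : Set (ι → ℚ) :=
  {x | ∃ z : ι → ℤ, x = B *ᵥ fun j => (z j : ℚ)} ∩ {x | ∀ i, 0 ≤ x i ∧ x i < p}

def labeling (B : Matrix ι ι ℚ) (p : ℚ) (z : ι → ℤ) : ι → ℚ :=
  fun i => qmod ((B *ᵥ fun j => (z j : ℚ)) i) p

variable {U : Matrix ι ι ℤ} {p : ℤ} {ps : ι → ℤ}

lemma codeBasis_mulVec_mul (hps : ∀ i, ps i ≠ 0) (w : ι → ℤ) :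
    codeBasis U p ps *ᵥ (fun j => ((ps j * w j : ℤ) : ℚ)) =
      fun i => (p : ℚ) * ((U *ᵥ w) i : ℚ) := by
  have hdiag :
      (diagonal fun i => (p : ℚ) / (ps i : ℚ)) *ᵥ (fun j => ((ps j * w j : ℤ) : ℚ)) =
        (p : ℚ) • fun j => (w j : ℚ) := by
    funext j
    have hpsj : (ps j : ℚ) ≠ 0 := by exact_mod_cast hps j
    rw [mulVec_diagonal, Pi.smul_apply, smul_eq_mul]
    push_cast
    field_simp
  funext i
  rw [codeBasis, ← mulVec_mulVec, hdiag, mulVec_smul, Pi.smul_apply, smul_eq_mul]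
  exact congrArg _ (RingHom.map_mulVec (Int.castRingHom ℚ) U w i).symm

lemma exists_codeBasis_mulVec_mul_eq (hU : IsUnit U.det) (hps : ∀ i, ps i ≠ 0) (k : ι → ℤ) :
    ∃ w : ι → ℤ, codeBasis U p ps *ᵥ (fun j => ((ps j * w j : ℤ) : ℚ)) =
      fun i => (p : ℚ) * (k i : ℚ) := by
  obtain ⟨w, hw⟩ := mulVec_surjective_iff_isUnit.mpr ((isUnit_iff_isUnit_det U).mpr hU) k
  exact ⟨w, by rw [codeBasis_mulVec_mul hps, hw]⟩

lemma codeBasis_mulVec_injective (hU : IsUnit U.det) (hp : p ≠ 0) (hps : ∀ i, ps i ≠ 0) :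
    Function.Injective (codeBasis U p ps).mulVec := by
  have hdet : (codeBasis U p ps).det ≠ 0 := by
    rw [codeBasis, det_mul, det_diagonal, ← Int.cast_det]
    refine mul_ne_zero (by exact_mod_cast hU.ne_zero) (Finset.prod_ne_zero_iff.mpr fun i _ => ?_)
    exact div_ne_zero (by exact_mod_cast hp) (by exact_mod_cast hps i)
  exact mulVec_injective_iff_isUnit.mpr
    ((isUnit_iff_isUnit_det _).mpr (isUnit_iff_ne_zero.mpr hdet))

lemma mapsTo_labeling (hU : IsUnit U.det) (hp : 0 < p) (hps : ∀ i, ps i ≠ 0) :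
    MapsTo (labeling (codeBasis U p ps) p) (messageSpace ps)
      (latticeCode (codeBasis U p ps) p) := by
  intro z _
  have hpq : (0 : ℚ) < p := by exact_mod_cast hp
  refine ⟨?_, fun i => ⟨qmod_nonneg _ hpq, qmod_lt _ hpq⟩⟩
  obtain ⟨w, hw⟩ := exists_codeBasis_mulVec_mul_eq (p := p) hU hps
    fun i => ⌊(codeBasis U p ps *ᵥ fun j => (z j : ℚ)) i / p⌋
  refine ⟨fun j => z j - ps j * w j, ?_⟩
  have hcast : (fun j => ((z j - ps j * w j : ℤ) : ℚ)) =
      (fun j => (z j : ℚ)) - fun j => ((ps j * w j : ℤ) : ℚ) := by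
    funext j
    push_cast
    rfl
  rw [hcast, mulVec_sub, hw]
  rfl

lemma injOn_labeling (hU : IsUnit U.det) (hp : p ≠ 0) (hps : ∀ i, ps i ≠ 0) :
    InjOn (labeling (codeBasis U p ps) p) (messageSpace ps) := by
  intro z hz z' hz' h
  set B := codeBasis U p ps
  set k : ι → ℤ := fun i =>
    ⌊(B *ᵥ fun j => (z j : ℚ)) i / p⌋ - ⌊(B *ᵥ fun j => (z' j : ℚ)) i / p⌋
  obtain ⟨w, hw⟩ := exists_codeBasis_mulVec_mul_eq (p := p) hU hps k
  have hmul : (fun j => ((ps j * w j : ℤ) : ℚ)) = fun j => ((z j - z' j : ℤ) : ℚ) := by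
    refine codeBasis_mulVec_injective hU hp hps ?_
    have hcast :
        (fun j => ((z j - z' j : ℤ) : ℚ)) = (fun j => (z j : ℚ)) - fun j => (z' j : ℚ) := by
      funext j
      push_cast
      rfl
    rw [hw, hcast, mulVec_sub]
    funext i
    exact (sub_eq_mul_of_qmod_eq (congrFun h i)).symm
  funext i
  have hdvd : ps i ∣ z i - z' i := ⟨w i, by exact_mod_cast (congrFun hmul i).symm⟩
  exact sub_eq_zero.mp <| Int.eq_zero_of_abs_lt_dvd hdvd <|
    abs_sub_lt_of_nonneg_of_lt (hz i).1 (hz i).2 (hz' i).1 (hz' i).2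

lemma surjOn_labeling (hp : p ≠ 0) (hps : ∀ i, 0 < ps i) :
    SurjOn (labeling (codeBasis U p ps) p) (messageSpace ps)
      (latticeCode (codeBasis U p ps) p) := by
  rintro x ⟨⟨z, rfl⟩, hx⟩
  refine ⟨fun i => z i % ps i,
    fun i => ⟨Int.emod_nonneg _ (hps i).ne', Int.emod_lt_of_pos _ (hps i)⟩, ?_⟩
  set B := codeBasis U p ps
  have hsplit : (fun j => (z j : ℚ)) =
      (fun j => ((z j % ps j : ℤ) : ℚ)) + fun j => ((ps j * (z j / ps j) : ℤ) : ℚ) := by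
    funext j
    rw [Pi.add_apply, ← Int.cast_add, Int.emod_add_mul_ediv]
  have hshift : B *ᵥ (fun j => ((z j % ps j : ℤ) : ℚ)) =
      fun i => (B *ᵥ fun j => (z j : ℚ)) i +
        p * ((-(U *ᵥ fun j => z j / ps j) i : ℤ) : ℚ) := by
    rw [hsplit, mulVec_add, codeBasis_mulVec_mul fun i => (hps i).ne']
    funext i
    rw [Pi.add_apply]
    push_cast
    ring
  funext i
  simp only [labeling, hshift, qmod_add_mul_intCast _ (Int.cast_ne_zero.mpr hp)]
  exact qmod_of_nonneg_of_lt (hx i).1 (hx i).2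

end LatticeCode

theorem labeling_bijective_general (n : ℕ)
    (U : Matrix (Fin n) (Fin n) ℤ) (hU : U.det = 1 ∨ U.det = -1)
    (p : ℤ) (hp : 0 < p) (ps : Fin n → ℤ) (hps : ∀ i, 0 < ps i)
    (Bf : Matrix (Fin n) (Fin n) ℚ)
    (hBf : Bf = (U.map ((↑) : ℤ → ℚ)) * Matrix.diagonal fun i => (p : ℚ) / (ps i : ℚ)) :
    Set.BijOn
      (fun z : Fin n → ℤ => fun i => qmod (Bf.mulVec (fun j => (z j : ℚ)) i) (p : ℚ))
      {z : Fin n → ℤ | ∀ i, 0 ≤ z i ∧ z i < ps i}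
      ({x : Fin n → ℚ | ∃ z : Fin n → ℤ, x = Bf.mulVec fun j => (z j : ℚ)} ∩
        {x : Fin n → ℚ | ∀ i, 0 ≤ x i ∧ x i < (p : ℚ)}) := by
  subst hBf
  have hUnit : IsUnit U.det := Int.isUnit_iff.mpr hU
  have hps' : ∀ i, ps i ≠ 0 := fun i => (hps i).ne'
  exact ⟨mapsTo_labeling hUnit hp hps', injOn_labeling hUnit hp.ne' hps',
    surjOn_labeling hp.ne' hps⟩

/-- the labeling function `f(z) = (B_f z) mod p` is a bijection from the
message space `I = {0,…,p₁−1} × ⋯ × {0,…,pₙ−1}` onto the lattice code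
`C(Λ_f, pℤⁿ) = L(B_f) ∩ [0,p)ⁿ`. -/
theorem labeling_bijective (n : ℕ) (hn : 1 ≤ n)
    (U : Matrix (Fin n) (Fin n) ℤ) (hU : U.det = 1 ∨ U.det = -1)
    (p : ℤ) (hp : 0 < p) (ps : Fin n → ℤ) (hps : ∀ i, 0 < ps i)
    (Bf : Matrix (Fin n) (Fin n) ℚ)
    (hBf : Bf = (U.map ((↑) : ℤ → ℚ)) * Matrix.diagonal fun i => (p : ℚ) / (ps i : ℚ)) :
    Set.BijOn
      (fun z : Fin n → ℤ => fun i => qmod (Bf.mulVec (fun j => (z j : ℚ)) i) (p : ℚ))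
      {z : Fin n → ℤ | ∀ i, 0 ≤ z i ∧ z i < ps i}
      ({x : Fin n → ℚ | ∃ z : Fin n → ℤ, x = Bf.mulVec fun j => (z j : ℚ)} ∩
        {x : Fin n → ℚ | ∀ i, 0 ≤ x i ∧ x i < (p : ℚ)}) :=
  labeling_bijective_general n U hU p hp ps hps Bf hBf
end

section
/- Let n ≥ 1, let U be an n×n unimodular integer matrix, let p and p_1,…,p_n be positive integers, set B_f = U·diag(p/p_1,…,p/p_n), and let f(z) = (B_f z) mod p componentwise. Then for every z ∈ I = {0,…,p_1−1}×⋯×{0,…,p_n−1} and every index i, the i-th component of B_f^{−1} f(z) reduced modulo p_i equals z_i; i.e., the delabeling map x ↦ (B_f^{−1}x mod (p_1,…,p_n)) is a left inverse of f on I. -/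
open Matrix

theorem qmod_sub_mul_intCast (a m : ℚ) (b : ℤ) (hm : m ≠ 0) : qmod (a - m * b) m = qmod a m := by
  have : (a - m * b) / m = a / m - b := by field_simp
  simp only [qmod, this, Int.floor_sub_intCast]
  push_cast
  ring

theorem qmod_eq_self {a m : ℚ} (h0 : 0 ≤ a) (hm : a < m) : qmod a m = a := by
  have : ⌊a / m⌋ = 0 :=
    Int.floor_eq_zero_iff.2 ⟨div_nonneg h0 (h0.trans hm.le), (div_lt_one (h0.trans_lt hm)).2 hm⟩
  simp [qmod, this]

namespace Matrix

variable {n K : Type*} [Fintype n] [DecidableEq n] [Field K]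

theorem inv_map_intCast (U : Matrix n n ℤ) (hU : IsUnit U.det) :
    (U.map ((↑) : ℤ → K))⁻¹ = U⁻¹.map (↑) := by
  refine inv_eq_right_inv ?_
  change (Int.castRingHom K).mapMatrix U * (Int.castRingHom K).mapMatrix U⁻¹ = 1
  rw [← map_mul, mul_nonsing_inv _ hU, map_one]

theorem inv_map_intCast_mul_diagonal (U : Matrix n n ℤ) (hU : IsUnit U.det) {d : n → K}
    (hd : ∀ i, d i ≠ 0) :
    (U.map ((↑) : ℤ → K) * diagonal d)⁻¹ = diagonal d⁻¹ * U⁻¹.map (↑) := by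
  rw [mul_inv_rev, inv_diagonal, inv_map_intCast U hU]
  congr
  ext i
  simp [Ring.inverse, Pi.isUnit_iff, hd]

theorem isUnit_det_map_intCast_mul_diagonal (U : Matrix n n ℤ) (hU : IsUnit U.det) {d : n → K}
    (hd : ∀ i, d i ≠ 0) : IsUnit (U.map ((↑) : ℤ → K) * diagonal d).det := by
  rw [det_mul, det_diagonal, ← Int.cast_det]
  exact (hU.map (Int.castRingHom K)).mul (Finset.prod_ne_zero_iff.2 fun i _ => hd i).isUnit

theorem inv_map_intCast_mul_diagonal_mulVec_smul (U : Matrix n n ℤ) (hU : IsUnit U.det)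
    {d : n → K} (hd : ∀ i, d i ≠ 0) (c : K) (k : n → ℤ) :
    (U.map ((↑) : ℤ → K) * diagonal d)⁻¹ *ᵥ (c • fun j => (k j : K)) =
      fun i => c / d i * ((U⁻¹ *ᵥ k) i : ℤ) := by
  ext i
  rw [inv_map_intCast_mul_diagonal U hU hd, ← mulVec_mulVec, mulVec_smul, mulVec_diagonal,
    Pi.smul_apply, smul_eq_mul]
  simp [mulVec, dotProduct, div_eq_inv_mul, mul_assoc]

end Matrix

theorem delabeling_left_inverse_general (n : ℕ)
    (U : Matrix (Fin n) (Fin n) ℤ) (hU : U.det = 1 ∨ U.det = -1)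
    (p : ℤ) (hp : 0 < p) (ps : Fin n → ℤ) (hps : ∀ i, 0 < ps i)
    (Bf : Matrix (Fin n) (Fin n) ℚ)
    (hBf : Bf = (U.map ((↑) : ℤ → ℚ)) * Matrix.diagonal fun i => (p : ℚ) / (ps i : ℚ))
    (f : (Fin n → ℤ) → (Fin n → ℚ))
    (hf : ∀ z, f z = fun i => qmod (Bf.mulVec (fun j => (z j : ℚ)) i) (p : ℚ)) :
    ∀ z ∈ {z : Fin n → ℤ | ∀ i, 0 ≤ z i ∧ z i < ps i},
      ∀ i, qmod (Bf⁻¹.mulVec (f z) i) ((ps i : ℚ)) = (z i : ℚ) := by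
  intro z hz i
  have hUunit : IsUnit U.det := by rcases hU with h | h <;> simp [h]
  have hp0 : (p : ℚ) ≠ 0 := by exact_mod_cast hp.ne'
  have hps0 : ∀ j, (ps j : ℚ) ≠ 0 := fun j => by exact_mod_cast (hps j).ne'
  have hd : ∀ j, (p : ℚ) / ps j ≠ 0 := fun j => div_ne_zero hp0 (hps0 j)
  have hBf_det : IsUnit Bf.det := hBf ▸ isUnit_det_map_intCast_mul_diagonal U hUunit hd
  set zq : Fin n → ℚ := fun j => (z j : ℚ)
  set k : Fin n → ℤ := fun j => ⌊(Bf *ᵥ zq) j / p⌋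
  have hfz : f z = Bf *ᵥ zq - (p : ℚ) • fun j => (k j : ℚ) := by
    rw [hf z]
    rfl
  have hdelabel : (Bf⁻¹ *ᵥ f z) i = z i - ps i * ((U⁻¹ *ᵥ k) i : ℤ) := by
    rw [hfz, mulVec_sub, mulVec_mulVec, nonsing_inv_mul _ hBf_det, one_mulVec, Pi.sub_apply,
      hBf, inv_map_intCast_mul_diagonal_mulVec_smul U hUunit hd]
    simp only [div_div_cancel₀ hp0, zq]
  rw [hdelabel, qmod_sub_mul_intCast _ _ _ (hps0 i)]
  exact qmod_eq_self (by exact_mod_cast (hz i).1) (by exact_mod_cast (hz i).2)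

/-- the delabeling map `x ↦ (B_f⁻¹ x mod (p₁,…,pₙ))` is a left inverse of the
labeling function `f(z) = (B_f z) mod p` on the message space
`I = {0,…,p₁−1} × ⋯ × {0,…,pₙ−1}`. -/
theorem delabeling_left_inverse (n : ℕ) (hn : 1 ≤ n)
    (U : Matrix (Fin n) (Fin n) ℤ) (hU : U.det = 1 ∨ U.det = -1)
    (p : ℤ) (hp : 0 < p) (ps : Fin n → ℤ) (hps : ∀ i, 0 < ps i)
    (Bf : Matrix (Fin n) (Fin n) ℚ)
    (hBf : Bf = (U.map ((↑) : ℤ → ℚ)) * Matrix.diagonal fun i => (p : ℚ) / (ps i : ℚ))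
    (f : (Fin n → ℤ) → (Fin n → ℚ))
    (hf : ∀ z, f z = fun i => qmod (Bf.mulVec (fun j => (z j : ℚ)) i) (p : ℚ)) :
    ∀ z ∈ {z : Fin n → ℤ | ∀ i, 0 ≤ z i ∧ z i < ps i},
      ∀ i, qmod (Bf⁻¹.mulVec (f z) i) ((ps i : ℚ)) = (z i : ℚ) :=
  delabeling_left_inverse_general n U hU p hp ps hps Bf hBf f hf
end

section
/- Let n ≥ 1, let U be an n×n unimodular integer matrix, let p and p_1,…,p_n be positive integers, set B_f = U·diag(p/p_1,…,p/p_n), and f(z) = (B_f z) mod p componentwise. Let z ∈ I = {0,…,p_1−1}×⋯×{0,…,p_n−1} and x = f(z). Suppose ν ∈ ℝ^n and w ∈ L(B_f) is a closest vector to ν in L(B_f), and additionally w ∈ pℤ^n. Then x + w is a closest vector to x + ν in L(B_f), and the delabeling of x + w recovers the message: for every i, the i-th component of B_f^{−1}(x + w) reduced modulo p_i equals z_i. -/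
/-- Euclidean norm on `ℝⁿ`. -/
noncomputable def enorm {n : ℕ} (v : Fin n → ℝ) : ℝ := Real.sqrt (∑ i, v i ^ 2)

/-!
Write `B_f = U · diag(p / pᵢ)` and `D = diag(pᵢ) · U⁻¹`, an integer matrix since `U` is unimodular.
Then `B_f · D = p · I`, so `pℤⁿ ⊆ L(B_f)` and `p · B_f⁻¹ = D`. Hence `x = B_f z - p k` (with `k` the
vector of floors) is a lattice vector, and translating by a lattice vector preserves closest
vectors. Moreover `B_f⁻¹ (x + p m) = z + D (m - k)`, whose `i`-th entry is `zᵢ` plus a multiple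
of `pᵢ`, so reducing modulo `pᵢ` returns `zᵢ` because `0 ≤ zᵢ < pᵢ`.
-/

theorem qmod_add_mul_intCast_s2 {a M : ℚ} (t : ℤ) (h0 : 0 ≤ a) (h1 : a < M) :
    qmod (a + M * t) M = a := by
  have hM : 0 < M := h0.trans_lt h1
  have hfloor : ⌊(a + M * t) / M⌋ = t := by
    rw [add_div, mul_div_cancel_left₀ _ hM.ne', Int.floor_add_intCast,
      Int.floor_eq_zero_iff.mpr ⟨div_nonneg h0 hM.le, (div_lt_one hM).mpr h1⟩, zero_add]
  rw [qmod, hfloor]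
  ring

theorem AddSubgroup.add_closest_of_mem {E α : Type*} [AddCommGroup E] [Preorder α]
    (S : AddSubgroup E) (f : E → α) {x ν w : E} (hx : x ∈ S) (hw : w ∈ S)
    (hclosest : ∀ w' ∈ S, f (ν - w) ≤ f (ν - w')) :
    x + w ∈ S ∧ ∀ w' ∈ S, f ((x + ν) - (x + w)) ≤ f ((x + ν) - w') := by
  refine ⟨S.add_mem hx hw, fun w' hw' => ?_⟩
  have hshift : (x + ν) - w' = ν - (w' - x) := by abel
  rw [add_sub_add_left_eq_sub, hshift]
  exact hclosest _ (S.sub_mem hw' hx)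

namespace Matrix

variable {ι R : Type*} [Fintype ι]

def intLattice [Ring R] (B : Matrix ι ι R) : AddSubgroup (ι → R) where
  carrier := {v | ∃ c : ι → ℤ, v = B *ᵥ fun j => (c j : R)}
  zero_mem' := ⟨0, by simp only [Pi.zero_apply, Int.cast_zero, ← Pi.zero_def, mulVec_zero]⟩
  add_mem' := by
    rintro _ _ ⟨a, rfl⟩ ⟨b, rfl⟩
    exact ⟨a + b, by simp only [Pi.add_apply, Int.cast_add, ← mulVec_add]; rfl⟩
  neg_mem' := by
    rintro _ ⟨a, rfl⟩
    exact ⟨-a, by simp only [Pi.neg_apply, Int.cast_neg, ← mulVec_neg]; rfl⟩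

theorem mulVec_mem_intLattice [Ring R] (B : Matrix ι ι R) (c : ι → ℤ) :
    (B *ᵥ fun j => (c j : R)) ∈ B.intLattice :=
  ⟨c, rfl⟩

theorem map_intCast_mulVec [Ring R] (D : Matrix ι ι ℤ) (v : ι → ℤ) :
    (D.map (↑) *ᵥ fun j => (v j : R)) = fun i => ((D *ᵥ v) i : R) :=
  (funext (RingHom.map_mulVec (Int.castRingHom R) D v)).symm

theorem map_mem_intLattice {S : Type*} [Ring R] [Ring S] (f : R →+* S) {B : Matrix ι ι R}
    {v : ι → R} (hv : v ∈ B.intLattice) : (fun i => f (v i)) ∈ (B.map f).intLattice := by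
  obtain ⟨c, rfl⟩ := hv
  refine ⟨c, funext fun i => ?_⟩
  rw [RingHom.map_mulVec]
  congr 2
  ext j
  simp

variable {K : Type*} [Field K] [DecidableEq ι] {B : Matrix ι ι K} {D : Matrix ι ι ℤ} {p : ℤ}

theorem intCast_mul_mem_intLattice (hBD : B * D.map (↑) = (p : K) • 1) (v : ι → ℤ) :
    (fun i => (p : K) * v i) ∈ B.intLattice := by
  refine ⟨D *ᵥ v, ?_⟩
  rw [← map_intCast_mulVec, mulVec_mulVec, hBD, smul_mulVec, one_mulVec]
  rfl

theorem mul_inv_smul_map_eq_one (hp : (p : K) ≠ 0) (hBD : B * D.map (↑) = (p : K) • 1) :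
    B * ((p : K)⁻¹ • D.map (↑)) = 1 := by
  rw [Matrix.mul_smul, hBD, smul_smul, inv_mul_cancel₀ hp, one_smul]

theorem inv_mulVec_mulVec_add_intCast_mul (hp : (p : K) ≠ 0) (hBD : B * D.map (↑) = (p : K) • 1)
    (y : ι → K) (t : ι → ℤ) :
    B⁻¹ *ᵥ (B *ᵥ y + fun i => (p : K) * t i) = y + fun i => ((D *ᵥ t) i : K) := by
  have hright := mul_inv_smul_map_eq_one hp hBD
  have hinv : B⁻¹ = (p : K)⁻¹ • D.map (↑) := inv_eq_right_inv hright
  have hleft : B⁻¹ * B = 1 := hinv ▸ mul_eq_one_comm.mp hright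
  have hscale : (fun i => (p : K) * t i) = (p : K) • fun i => (t i : K) := rfl
  rw [mulVec_add, mulVec_mulVec, hleft, one_mulVec, hscale, mulVec_smul, hinv, smul_mulVec,
    smul_smul, mul_inv_cancel₀ hp, one_smul, map_intCast_mulVec]

theorem map_mul_diagonal_div_mul_map_eq_smul (U : Matrix ι ι ℤ) (hU : IsUnit U.det) (q : K)
    (ps : ι → ℤ) (hps : ∀ i, (ps i : K) ≠ 0) :
    U.map (↑) * diagonal (fun i => q / ps i) * (diagonal ps * U⁻¹).map (↑) = q • 1 := by
  have hmap (A C : Matrix ι ι ℤ) : (A * C).map (Int.cast : ℤ → K) = A.map (↑) * C.map (↑) :=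
    Matrix.map_mul (f := Int.castRingHom K)
  have hdiag : diagonal (fun i => q / ps i) * (diagonal ps).map (↑) = q • (1 : Matrix ι ι K) := by
    rw [diagonal_map Int.cast_zero, diagonal_mul_diagonal, smul_one_eq_diagonal]
    exact congrArg diagonal (funext fun i => div_mul_cancel₀ q (hps i))
  have hUinv : U.map (↑) * U⁻¹.map (↑) = (1 : Matrix ι ι K) := by
    rw [← hmap, mul_nonsing_inv U hU]
    exact Matrix.map_one _ Int.cast_zero Int.cast_one
  rw [hmap, Matrix.mul_assoc, ← Matrix.mul_assoc (diagonal _), hdiag, Matrix.smul_mul,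
    Matrix.one_mul, Matrix.mul_smul, hUinv]

end Matrix

open Matrix in
theorem correct_decoding_general (n : ℕ)
    (U : Matrix (Fin n) (Fin n) ℤ) (hU : U.det = 1 ∨ U.det = -1)
    (p : ℤ) (hp : 0 < p) (ps : Fin n → ℤ) (hps : ∀ i, 0 < ps i)
    (Bf : Matrix (Fin n) (Fin n) ℚ)
    (hBf : Bf = (U.map ((↑) : ℤ → ℚ)) * Matrix.diagonal fun i => (p : ℚ) / (ps i : ℚ))
    (z : Fin n → ℤ) (hz : ∀ i, 0 ≤ z i ∧ z i < ps i)
    (x : Fin n → ℚ)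
    (hx : x = fun i => qmod (Bf.mulVec (fun j => (z j : ℚ)) i) (p : ℚ))
    -- the real lattice L(B_f)
    (L : Set (Fin n → ℝ))
    (hL : L = {v : Fin n → ℝ |
      ∃ c : Fin n → ℤ, v = (Bf.map ((↑) : ℚ → ℝ)).mulVec fun j => (c j : ℝ)})
    (ν w : Fin n → ℝ)
    (hwL : w ∈ L)
    (hwclosest : ∀ w' ∈ L, _root_.enorm (ν - w) ≤ _root_.enorm (ν - w'))
    (m : Fin n → ℤ) :
    ((fun i => ((x i : ℝ)) + w i) ∈ L ∧
      ∀ w' ∈ L, _root_.enorm ((fun i => (x i : ℝ) + ν i) - fun i => (x i : ℝ) + w i) ≤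
        _root_.enorm ((fun i => (x i : ℝ) + ν i) - w')) ∧
    ∀ i, qmod (Bf⁻¹.mulVec (fun j => x j + (p : ℚ) * (m j : ℚ)) i) ((ps i : ℚ)) = (z i : ℚ) := by
  have hpQ : (p : ℚ) ≠ 0 := by positivity
  have hBD : Bf * (diagonal ps * U⁻¹).map (↑) = (p : ℚ) • 1 := hBf ▸
    map_mul_diagonal_div_mul_map_eq_smul U (Int.isUnit_iff.mpr hU) _ ps fun i => by
      have := hps i; positivity
  set k : Fin n → ℤ := fun i => ⌊(Bf *ᵥ fun j => (z j : ℚ)) i / p⌋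
  have hxk : x = (Bf *ᵥ fun j => (z j : ℚ)) - fun i => (p : ℚ) * k i := hx
  have hxL : x ∈ Bf.intLattice :=
    hxk ▸ sub_mem (mulVec_mem_intLattice Bf z) (intCast_mul_mem_intLattice hBD k)
  refine ⟨?_, fun i => ?_⟩
  · have hL' : L = ((Bf.map ((↑) : ℚ → ℝ)).intLattice : Set (Fin n → ℝ)) := hL
    subst hL'
    exact AddSubgroup.add_closest_of_mem _ _ (map_mem_intLattice (Rat.castHom ℝ) hxL) hwL
      hwclosest
  · have hxm : (fun j => x j + (p : ℚ) * m j) =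
        (Bf *ᵥ fun j => (z j : ℚ)) + fun j => (p : ℚ) * (m - k) j := by
      rw [hxk]; ext j; push_cast [Pi.add_apply, Pi.sub_apply]; ring
    rw [hxm, inv_mulVec_mulVec_add_intCast_mul hpQ hBD, Pi.add_apply, ← mulVec_mulVec,
      mulVec_diagonal, Int.cast_mul]
    exact qmod_add_mul_intCast_s2 _ (mod_cast (hz i).1) (mod_cast (hz i).2)

/-- if `w` is a closest vector to `ν` in `L(B_f)` and moreover `w ∈ pℤⁿ`,
then `x + w` is a closest vector to `x + ν` in `L(B_f)`, and delabeling `x + w`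
recovers the message `z`. -/
theorem correct_decoding (n : ℕ) (hn : 1 ≤ n)
    (U : Matrix (Fin n) (Fin n) ℤ) (hU : U.det = 1 ∨ U.det = -1)
    (p : ℤ) (hp : 0 < p) (ps : Fin n → ℤ) (hps : ∀ i, 0 < ps i)
    (Bf : Matrix (Fin n) (Fin n) ℚ)
    (hBf : Bf = (U.map ((↑) : ℤ → ℚ)) * Matrix.diagonal fun i => (p : ℚ) / (ps i : ℚ))
    (z : Fin n → ℤ) (hz : ∀ i, 0 ≤ z i ∧ z i < ps i)
    (x : Fin n → ℚ)
    (hx : x = fun i => qmod (Bf.mulVec (fun j => (z j : ℚ)) i) (p : ℚ))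
    -- the real lattice L(B_f)
    (L : Set (Fin n → ℝ))
    (hL : L = {v : Fin n → ℝ |
      ∃ c : Fin n → ℤ, v = (Bf.map ((↑) : ℚ → ℝ)).mulVec fun j => (c j : ℝ)})
    (ν w : Fin n → ℝ)
    (hwL : w ∈ L)
    (hwclosest : ∀ w' ∈ L, _root_.enorm (ν - w) ≤ _root_.enorm (ν - w'))
    -- w ∈ pℤⁿ
    (m : Fin n → ℤ) (hw : w = fun i => (p : ℝ) * (m i : ℝ)) :
    ((fun i => ((x i : ℝ)) + w i) ∈ L ∧
      ∀ w' ∈ L, _root_.enorm ((fun i => (x i : ℝ) + ν i) - fun i => (x i : ℝ) + w i) ≤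
        _root_.enorm ((fun i => (x i : ℝ) + ν i) - w')) ∧
    ∀ i, qmod (Bf⁻¹.mulVec (fun j => x j + (p : ℚ) * (m j : ℚ)) i) ((ps i : ℚ)) = (z i : ℚ) :=
  correct_decoding_general n U hU p hp ps hps Bf hBf z hz x hx L hL ν w hwL hwclosest m
end

section
/- Let a ≥ 1, let 1 ≤ k_0 ≤ k_1 ≤ ⋯ ≤ k_{a−1} ≤ k_a = n be integers, and let G be an n×n integer matrix with all entries in {0,1} and det G = ±1. For 0 ≤ i ≤ a−1 let S_i = {G u : u ∈ {0,1}^n with u_j = 0 for all j > k_i}. Define the Construction-D set Λ_D = { s_0 + 2 s_1 + 4 s_2 + ⋯ + 2^{a−1} s_{a−1} + 2^a m : s_i ∈ S_i, m ∈ ℤ^n }. Then Λ_D = L(G·D), where D is the n×n diagonal matrix whose j-th diagonal entry is 2^{i(j)} with i(j) = min{ i ∈ {0,…,a} : j ≤ k_i }. In particular, Λ_D is a lattice and 2^a ℤ^n ⊆ Λ_D. -/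
/-!
Since `G` is unimodular, `G.mulVec` is a bijection of `ℤⁿ` carrying the codes `S i` to the
coordinate codes (binary vectors supported on the first `k i` coordinates), so it suffices to
treat `G = 1`. There, writing `e j` for the first level whose code reaches coordinate `j`, a
vector `x` is `∑ 2^i u_i + 2^a w` with such binary `u_i` iff `2^(e j) ∣ x j` for all `j`: the
`u_i` are the binary digits of `x`, and the digits below `e j` are the ones forced to vanish.
This is the image of `D = diag(2^(e j))`.
-/

namespace Int

theorem sum_two_pow_mul_digit_add_two_pow_mul_ediv (a : ℕ) (x : ℤ) :
    (∑ i ∈ Finset.range a, 2 ^ i * (x / 2 ^ i % 2)) + 2 ^ a * (x / 2 ^ a) = x := by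
  induction a with
  | zero => simp
  | succ a ih =>
    have hdiv : x / 2 ^ (a + 1) = x / 2 ^ a / 2 := by
      rw [pow_succ, ediv_ediv_of_nonneg (by positivity)]
    rw [Finset.sum_range_succ, hdiv]
    linear_combination ih + 2 ^ a * mul_ediv_add_emod (x / 2 ^ a) 2

theorem ediv_two_pow_emod_two_eq_zero {i e : ℕ} {x : ℤ} (hi : i < e) (hx : 2 ^ e ∣ x) :
    x / 2 ^ i % 2 = 0 := by
  obtain ⟨t, rfl⟩ := hx
  have hsplit : (2 : ℤ) ^ e = 2 ^ i * (2 * 2 ^ (e - i - 1)) := by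
    rw [← pow_succ', ← pow_add]; congr 1; omega
  rw [hsplit, mul_assoc, mul_ediv_cancel_left _ (by positivity), mul_assoc, mul_emod_right]

end Int

theorem Matrix.range_mulVec_diagonal {ι α : Type*} [Fintype ι] [DecidableEq ι] [CommSemiring α]
    (d : ι → α) : Set.range (diagonal d).mulVec = {x | ∀ j, d j ∣ x j} := by
  ext x
  constructor
  · rintro ⟨z, rfl⟩ j
    simp [mulVec_diagonal]
  · intro hx
    choose z hz using hx
    exact ⟨z, funext fun j => by rw [mulVec_diagonal, hz]⟩

section ConstructionD

variable {M N : Type*} [AddCommGroup M] [AddCommGroup N]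

/-- Only the `s i` with `i < a` matter; the other values of `s` are ignored. -/
def constructionDSet (a : ℕ) (B : ℕ → Set M) : Set M :=
  {y | ∃ s : ℕ → M, (∀ i < a, s i ∈ B i) ∧
    ∃ m : M, y = (∑ i ∈ Finset.range a, (2 : ℤ) ^ i • s i) + (2 : ℤ) ^ a • m}

theorem two_pow_smul_mem_constructionDSet {a : ℕ} {B : ℕ → Set M} (hB : ∀ i < a, 0 ∈ B i)
    (m : M) : (2 : ℤ) ^ a • m ∈ constructionDSet a B :=
  ⟨0, hB, m, by simp⟩

theorem constructionDSet_image {F : Type*} [FunLike F M N] [AddMonoidHomClass F M N]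
    (f : F) (hf : Function.Surjective f) (a : ℕ) (B : ℕ → Set M) :
    constructionDSet a (fun i => f '' B i) = f '' constructionDSet a B := by
  ext y
  constructor
  · rintro ⟨s, hs, m, rfl⟩
    choose u hu hus using hs
    obtain ⟨w, rfl⟩ := hf m
    let u' (i : ℕ) : M := if h : i < a then u i h else 0
    refine ⟨_, ⟨u', fun i hi => by simpa [u', hi] using hu i hi, w, rfl⟩, ?_⟩
    simp only [map_add, map_sum, map_zsmul]
    congr 1
    refine Finset.sum_congr rfl fun i hi => ?_
    rw [Finset.mem_range] at hi
    simp [u', hi, hus]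
  · rintro ⟨_, ⟨u, hu, w, rfl⟩, rfl⟩
    refine ⟨fun i => f (u i), fun i hi => ⟨u i, hu i hi, rfl⟩, f w, ?_⟩
    simp only [map_add, map_sum, map_zsmul]

end ConstructionD

theorem constructionDSet_eq_two_pow_dvd {ι : Type*} (a : ℕ) (e : ι → ℕ)
    (he : ∀ j, e j ≤ a) (B : ℕ → Set (ι → ℤ))
    (hB : ∀ i < a, B i = {u | (∀ j, u j = 0 ∨ u j = 1) ∧ ∀ j, i < e j → u j = 0}) :
    constructionDSet a B = {x | ∀ j, 2 ^ e j ∣ x j} := by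
  ext x
  constructor
  · rintro ⟨u, hu, w, rfl⟩ j
    simp only [Pi.add_apply, Finset.sum_apply, Pi.smul_apply, smul_eq_mul]
    refine dvd_add (Finset.dvd_sum fun i hi => ?_) (dvd_mul_of_dvd_left (pow_dvd_pow 2 (he j)) _)
    rw [Finset.mem_range] at hi
    rcases lt_or_ge i (e j) with hij | hij
    · have hui := hu i hi
      rw [hB i hi] at hui
      simp [hui.2 j hij]
    · exact dvd_mul_of_dvd_left (pow_dvd_pow 2 hij) _
  · intro hx
    refine ⟨fun i j => x j / 2 ^ i % 2, fun i hi => ?_, fun j => x j / 2 ^ a, ?_⟩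
    · rw [hB i hi]
      exact ⟨fun j => Int.emod_two_eq _,
        fun j hij => Int.ediv_two_pow_emod_two_eq_zero hij (hx j)⟩
    · ext j
      simpa using (Int.sum_two_pow_mul_digit_add_two_pow_mul_ediv a (x j)).symm

theorem lt_sInf_setOf_lt_iff {a : ℕ} {k : ℕ → ℕ} (hk : ∀ i j, i ≤ j → j ≤ a → k i ≤ k j)
    {j : ℕ} (hj : j < k a) {i : ℕ} (hi : i ≤ a) : i < sInf {i | i ≤ a ∧ j < k i} ↔ k i ≤ j := by
  have hmem : sInf {i | i ≤ a ∧ j < k i} ∈ {i | i ≤ a ∧ j < k i} :=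
    Nat.sInf_mem ⟨a, le_rfl, hj⟩
  constructor
  · intro h
    by_contra! hji
    exact Nat.notMem_of_lt_sInf h ⟨hi, hji⟩
  · intro hij
    by_contra! h
    exact (hmem.2.trans_le (hk _ _ h hi)).not_ge hij

theorem constructionD_basis_general (a n : ℕ)
    (k : ℕ → ℕ) (hmono : ∀ i j, i ≤ j → j ≤ a → k i ≤ k j)
    (hka : k a = n)
    (G : Matrix (Fin n) (Fin n) ℤ)
    (hGdet : G.det = 1 ∨ G.det = -1)
    (S : ℕ → Set (Fin n → ℤ))
    (hS : ∀ i, S i = {y | ∃ u : Fin n → ℤ, (∀ j, u j = 0 ∨ u j = 1) ∧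
      (∀ j : Fin n, k i ≤ (j : ℕ) → u j = 0) ∧ y = G.mulVec u})
    (D : Matrix (Fin n) (Fin n) ℤ)
    (hD : D = Matrix.diagonal fun j : Fin n =>
      (2 : ℤ) ^ sInf {i : ℕ | i ≤ a ∧ (j : ℕ) < k i}) :
    {y : Fin n → ℤ | ∃ s : ℕ → Fin n → ℤ, (∀ i < a, s i ∈ S i) ∧
        ∃ m : Fin n → ℤ,
          y = (∑ i ∈ Finset.range a, (2 : ℤ) ^ i • s i) + (2 : ℤ) ^ a • m} =
      {y : Fin n → ℤ | ∃ z : Fin n → ℤ, y = (G * D).mulVec z} ∧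
    ∀ m : Fin n → ℤ,
      (fun j => (2 : ℤ) ^ a * m j) ∈
        {y : Fin n → ℤ | ∃ z : Fin n → ℤ, y = (G * D).mulVec z} := by
  set e : Fin n → ℕ := fun j => sInf {i : ℕ | i ≤ a ∧ (j : ℕ) < k i}
  have hjk (j : Fin n) : (j : ℕ) < k a := hka ▸ j.isLt
  set B : ℕ → Set (Fin n → ℤ) := fun i =>
    {u | (∀ j, u j = 0 ∨ u j = 1) ∧ ∀ j : Fin n, k i ≤ (j : ℕ) → u j = 0}
  have hSB : S = fun i => G.mulVecLin '' B i := by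
    ext i y
    simp [hS, B, eq_comm, and_assoc]
  have hB (i : ℕ) (hi : i < a) :
      B i = {u | (∀ j, u j = 0 ∨ u j = 1) ∧ ∀ j, i < e j → u j = 0} := by
    ext u
    simp only [B, e, Set.mem_ofPred_eq, lt_sInf_setOf_lt_iff hmono (hjk _) hi.le]
  have hGsurj : Function.Surjective G.mulVecLin :=
    Matrix.mulVec_surjective_iff_isUnit.2 <| (Matrix.isUnit_iff_isUnit_det G).2 <| by
      rcases hGdet with h | h <;> simp [h]
  have hrange :
      {y | ∃ z, y = (G * D).mulVec z} = G.mulVecLin '' {x | ∀ j, 2 ^ e j ∣ x j} := by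
    rw [← Matrix.range_mulVec_diagonal, ← hD, ← Set.range_comp]
    ext y
    simp [eq_comm]
  have key : constructionDSet a S = {y | ∃ z, y = (G * D).mulVec z} := by
    rw [hSB, constructionDSet_image _ hGsurj, hrange,
      constructionDSet_eq_two_pow_dvd a e (fun j => Nat.sInf_le ⟨le_rfl, hjk j⟩) B hB]
  refine ⟨key, fun m => ?_⟩
  rw [← key]
  exact two_pow_smul_mem_constructionDSet (fun i _ => by rw [hS]; exact ⟨0, by simp⟩) m

/-- the Construction-D set built from nested binary codes generated by
initial segments of the columns of a unimodular 0–1 matrix `G` equals the lattice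
`L(G·D)` where `D = diag(2^{i(j)})`, `i(j) = min{i ∈ {0,…,a} : j ≤ k_i}`; in particular
`2^a ℤⁿ ⊆ Λ_D`. -/
theorem constructionD_basis (a n : ℕ) (ha : 1 ≤ a)
    (k : ℕ → ℕ) (hmono : ∀ i j, i ≤ j → j ≤ a → k i ≤ k j)
    (hk0 : 1 ≤ k 0) (hka : k a = n)
    (G : Matrix (Fin n) (Fin n) ℤ) (hG01 : ∀ i j, G i j = 0 ∨ G i j = 1)
    (hGdet : G.det = 1 ∨ G.det = -1)
    (S : ℕ → Set (Fin n → ℤ))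
    (hS : ∀ i, S i = {y | ∃ u : Fin n → ℤ, (∀ j, u j = 0 ∨ u j = 1) ∧
      (∀ j : Fin n, k i ≤ (j : ℕ) → u j = 0) ∧ y = G.mulVec u})
    (D : Matrix (Fin n) (Fin n) ℤ)
    (hD : D = Matrix.diagonal fun j : Fin n =>
      (2 : ℤ) ^ sInf {i : ℕ | i ≤ a ∧ (j : ℕ) < k i}) :
    {y : Fin n → ℤ | ∃ s : ℕ → Fin n → ℤ, (∀ i < a, s i ∈ S i) ∧
        ∃ m : Fin n → ℤ,
          y = (∑ i ∈ Finset.range a, (2 : ℤ) ^ i • s i) + (2 : ℤ) ^ a • m} =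
      {y : Fin n → ℤ | ∃ z : Fin n → ℤ, y = (G * D).mulVec z} ∧
    ∀ m : Fin n → ℤ,
      (fun j => (2 : ℤ) ^ a * m j) ∈
        {y : Fin n → ℤ | ∃ z : Fin n → ℤ, y = (G * D).mulVec z} :=
  constructionD_basis_general a n k hmono hka G hGdet S hS D hD
end

section
/- Correctness of the D_n closest-vector algorithm: let n ≥ 1, y ∈ ℝ^n, and let u ∈ ℤ^n satisfy |y_i − u_i| ≤ 1/2 for all i (a componentwise nearest-integer rounding of y). Let t* be an index maximizing |y_t − u_t| over t, and set v = u + e_{t*} if y_{t*} − u_{t*} > 0 and v = u − e_{t*} otherwise, where e_{t*} is the t*-th standard basis vector. Then: if u_1 + ⋯ + u_n is even, u is a closest vector to y in D_n (i.e., ‖y − u‖ ≤ ‖y − w‖ for all w ∈ D_n); otherwise v is a closest vector to y in D_n. -/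
theorem Finset.sum_eq_sum_add_sub_of_eq_off {ι M : Type*} [Fintype ι] [AddCommGroup M]
    {f g : ι → M} (t : ι) (h : ∀ i ≠ t, f i = g i) :
    ∑ i, f i = ∑ i, g i + (f t - g t) := by
  rw [← sub_eq_iff_eq_add', ← Finset.sum_sub_distrib]
  exact Finset.sum_eq_single t (fun i _ hi => by rw [h i hi, sub_self]) (by simp)

theorem Finset.sum_add_sub_le_sum_of_le {ι M : Type*} [Fintype ι]
    [AddCommGroup M] [PartialOrder M] [IsOrderedAddMonoid M]
    {f g : ι → M} (h : ∀ i, g i ≤ f i) (j : ι) :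
    ∑ i, g i + (f j - g j) ≤ ∑ i, f i := by
  rw [← le_sub_iff_add_le', ← Finset.sum_sub_distrib]
  exact Finset.single_le_sum (fun i _ => sub_nonneg.mpr (h i)) (Finset.mem_univ j)

theorem sq_sub_add_le_sq_sub_of_ne {y : ℝ} {u w : ℤ} (hu : |y - u| ≤ 1) (hw : w ≠ u) :
    (y - u) ^ 2 + (1 - 2 * |y - u|) ≤ (y - w) ^ 2 := by
  have hgap : (1 : ℝ) ≤ |(u : ℝ) - w| := by
    exact_mod_cast Int.one_le_abs (sub_ne_zero.mpr hw.symm)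
  have hfar : 1 - |y - u| ≤ |y - w| := by
    have := abs_sub_abs_le_abs_sub ((u : ℝ) - w) ((u : ℝ) - y)
    rw [show (u : ℝ) - w - (u - y) = y - w by ring, abs_sub_comm (u : ℝ) y] at this
    linarith
  calc (y - u) ^ 2 + (1 - 2 * |y - u|) = (1 - |y - u|) ^ 2 := by rw [← sq_abs (y - u)]; ring
    _ ≤ |y - w| ^ 2 := pow_le_pow_left₀ (by linarith) hfar 2
    _ = (y - w) ^ 2 := sq_abs _

theorem sq_sub_le_sq_sub_of_abs_sub_le_half {y : ℝ} {u : ℤ} (hu : |y - u| ≤ 1 / 2) (w : ℤ) :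
    (y - u) ^ 2 ≤ (y - w) ^ 2 := by
  rcases eq_or_ne w u with rfl | hw
  · exact le_rfl
  · linarith [sq_sub_add_le_sq_sub_of_ne (hu.trans (by norm_num)) hw]

theorem sq_sub_ite_add_one_sub_one (y : ℝ) (u : ℤ) :
    (y - ((if 0 < y - u then u + 1 else u - 1 : ℤ) : ℝ)) ^ 2 = (y - u) ^ 2 + (1 - 2 * |y - u|) := by
  split_ifs with hpos
  · rw [abs_of_pos hpos]; push_cast; ring
  · rw [abs_of_nonpos (not_lt.mp hpos)]; push_cast; ring

theorem Dn_decoder_correct_general (n : ℕ) (y : Fin n → ℝ) (u : Fin n → ℤ)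
    (hu : ∀ i, |y i - (u i : ℝ)| ≤ 1 / 2)
    (tstar : Fin n)
    (htstar : ∀ t, |y t - (u t : ℝ)| ≤ |y tstar - (u tstar : ℝ)|)
    (v : Fin n → ℤ)
    (hv : v = fun i => if i = tstar then
      (if 0 < y tstar - (u tstar : ℝ) then u tstar + 1 else u tstar - 1) else u i) :
    (Even (∑ i, u i) → ∀ w : Fin n → ℤ, Even (∑ i, w i) →
      _root_.enorm (fun i => y i - (u i : ℝ)) ≤ _root_.enorm (fun i => y i - (w i : ℝ))) ∧
    (¬ Even (∑ i, u i) → ∀ w : Fin n → ℤ, Even (∑ i, w i) →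
      _root_.enorm (fun i => y i - (v i : ℝ)) ≤ _root_.enorm (fun i => y i - (w i : ℝ))) := by
  have hround (w : Fin n → ℤ) (i : Fin n) : (y i - u i) ^ 2 ≤ (y i - w i) ^ 2 :=
    sq_sub_le_sq_sub_of_abs_sub_le_half (hu i) (w i)
  refine ⟨fun _ w _ => Real.sqrt_le_sqrt (Finset.sum_le_sum fun i _ => hround w i),
    fun hodd w hw => Real.sqrt_le_sqrt ?_⟩
  obtain ⟨j, hj⟩ : ∃ j, w j ≠ u j := by
    by_contra! hwu
    exact hodd (funext hwu ▸ hw)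
  calc ∑ i, (y i - (v i : ℝ)) ^ 2
      = ∑ i, (y i - (u i : ℝ)) ^ 2 + (1 - 2 * |y tstar - u tstar|) := by
        rw [Finset.sum_eq_sum_add_sub_of_eq_off (g := fun i => (y i - (u i : ℝ)) ^ 2) tstar
          (fun i hi => by simp [hv, hi]), hv]
        simp only [if_pos, sq_sub_ite_add_one_sub_one]
        ring
    _ ≤ ∑ i, (y i - (u i : ℝ)) ^ 2 + (1 - 2 * |y j - u j|) := by linarith [htstar j]
    _ ≤ ∑ i, (y i - (u i : ℝ)) ^ 2 + ((y j - w j) ^ 2 - (y j - u j) ^ 2) := by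
        linarith [sq_sub_add_le_sq_sub_of_ne ((hu j).trans (by norm_num)) hj]
    _ ≤ ∑ i, (y i - (w i : ℝ)) ^ 2 := Finset.sum_add_sub_le_sum_of_le (hround w) j

/-- correctness of the `D_n` closest-vector algorithm. If `u` rounds `y`
componentwise to nearest integers, `t*` maximizes `|y_t − u_t|`, and `v` is `u` with the
`t*`-th coordinate pushed towards `y`, then `u` is a closest vector to `y` in
`D_n = {w ∈ ℤⁿ : Σ w_i even}` when `Σ u_i` is even, and `v` is a closest vector otherwise. -/
theorem Dn_decoder_correct (n : ℕ) (hn : 1 ≤ n) (y : Fin n → ℝ) (u : Fin n → ℤ)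
    (hu : ∀ i, |y i - (u i : ℝ)| ≤ 1 / 2)
    (tstar : Fin n)
    (htstar : ∀ t, |y t - (u t : ℝ)| ≤ |y tstar - (u tstar : ℝ)|)
    (v : Fin n → ℤ)
    (hv : v = fun i => if i = tstar then
      (if 0 < y tstar - (u tstar : ℝ) then u tstar + 1 else u tstar - 1) else u i) :
    (Even (∑ i, u i) → ∀ w : Fin n → ℤ, Even (∑ i, w i) →
      _root_.enorm (fun i => y i - (u i : ℝ)) ≤ _root_.enorm (fun i => y i - (w i : ℝ))) ∧
    (¬ Even (∑ i, u i) → ∀ w : Fin n → ℤ, Even (∑ i, w i) →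
      _root_.enorm (fun i => y i - (v i : ℝ)) ≤ _root_.enorm (fun i => y i - (w i : ℝ))) :=
  Dn_decoder_correct_general n y u hu tstar htstar v hv
end
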